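/- Let m, p be positive integers, ρ_in : SO(3) → GL(m,ℝ) a group homomorphism, and ρ_out : SO(3) → O(p) a group homomorphism into the real p×p orthogonal matrices. Let W_Q ∈ ℝ^{p×m} satisfy W_Q·ρ_in(r) = ρ_out(r)·W_Q for all r ∈ SO(3), and let W_K, W_V : ℝ³ → ℝ^{p×m} satisfy W_K(R_r·y)·ρ_in(r) = ρ_out(r)·W_K(y) and W_V(R_r·y)·ρ_in(r) = ρ_out(r)·W_V(y) for all r ∈ SO(3), y ∈ ℝ³. For a point cloud X : Fin N → ℝ³ and features F : Fin N → ℝ^m, define the self-attention layer SA(F,X)_i = Σ_{j ∈ N_i^k(X)} α_X(F)(i,j) · W_V(X j − X i)·F j, where α_X(F)(i,j) = exp(⟨W_Q·F i, W_K(X j − X i)·F j⟩) / Σ_{j' ∈ N_i^k(X)} exp(⟨W_Q·F i, W_K(X j' − X i)·F j'⟩). Then the layer is SE(3)-equivariant: for every r ∈ SO(3) with rotation matrix R, every T ∈ ℝ³, and every index i, SA(ρ_in(r)∘F, L_{(R,T)}[X])_i = ρ_out(r)·SA(F,X)_i. -/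

import Mathlib

open Matrix

noncomputable section

/-- `SO(3)`: real 3×3 orthogonal matrices of determinant 1. -/
abbrev SO3 := Matrix.specialOrthogonalGroup (Fin 3) ℝ

noncomputable instance : Group SO3 :=
  { (inferInstance : Monoid SO3) with
    inv := fun A => ⟨star A.1, ⟨Unitary.star_mem A.2.1, by
      have h : (star A.1).det = star (A.1.det) := by
        rw [Matrix.star_eq_conjTranspose, Matrix.det_conjTranspose]
      have h2 : A.1.det = 1 := A.2.2
      simpa [MonoidHom.mem_mker, h2] using h⟩⟩
    inv_mul_cancel := fun A => Subtype.ext A.2.1.1 }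

/-- Euclidean 3-space. -/
abbrev V3 := EuclideanSpace ℝ (Fin 3)

/-- Matrix-vector multiplication on Euclidean 3-space. -/
def mv (M : Matrix (Fin 3) (Fin 3) ℝ) (v : V3) : V3 :=
  (WithLp.equiv 2 (Fin 3 → ℝ)).symm (M *ᵥ (WithLp.equiv 2 (Fin 3 → ℝ) v))

/-- Roto-translation action `L_{(R,T)}` on point clouds: `(L_{(R,T)}[X]) i = R·(X i) + T`. -/
def rt {N : ℕ} (R : SO3) (T : V3) (X : Fin N → V3) : Fin N → V3 :=
  fun i => mv (R : Matrix (Fin 3) (Fin 3) ℝ) (X i) + T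

open scoped Classical in
/-- `d_k(X,i)`: the k-th smallest distance from `X i` to points of `X`. -/
def dk {N : ℕ} (X : Fin N → V3) (i : Fin N) (k : ℕ) : ℝ :=
  sInf { d : ℝ | k ≤ (Finset.univ.filter (fun j => ‖X i - X j‖ ≤ d)).card }

open scoped Classical in
/-- `N_i^k(X)`: the k-nearest-neighbor neighborhood of point `i` (including ties). -/
def nbhd {N : ℕ} (X : Fin N → V3) (i : Fin N) (k : ℕ) : Finset (Fin N) :=
  Finset.univ.filter (fun j => ‖X i - X j‖ ≤ dk X i k)

/-- The attention kernel
`α_X(F)(i,j) = exp⟨W_Q·F i, W_K(X j − X i)·F j⟩ / Σ_{j' ∈ N_i^k(X)} exp⟨W_Q·F i, W_K(X j' − X i)·F j'⟩`. -/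
def attnKernel {N : ℕ} (m p k : ℕ) (WQ : Matrix (Fin p) (Fin m) ℝ)
    (WK : V3 → Matrix (Fin p) (Fin m) ℝ)
    (X : Fin N → V3) (F : Fin N → (Fin m → ℝ)) (i j : Fin N) : ℝ :=
  Real.exp ((WQ *ᵥ F i) ⬝ᵥ (WK (X j - X i) *ᵥ F j)) /
    ∑ j' ∈ nbhd X i k, Real.exp ((WQ *ᵥ F i) ⬝ᵥ (WK (X j' - X i) *ᵥ F j'))

/-- The self-attention layer
`SA(F,X)_i = Σ_{j ∈ N_i^k(X)} α_X(F)(i,j) · W_V(X j − X i)·F j`. -/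
def selfAttn {N : ℕ} (m p k : ℕ) (WQ : Matrix (Fin p) (Fin m) ℝ)
    (WK WV : V3 → Matrix (Fin p) (Fin m) ℝ)
    (X : Fin N → V3) (F : Fin N → (Fin m → ℝ)) (i : Fin N) : Fin p → ℝ :=
  ∑ j ∈ nbhd X i k, attnKernel m p k WQ WK X F i j • (WV (X j - X i) *ᵥ F j)

/-
Roto-translations preserve pairwise distances, so the neighbourhoods `N_i^k` do not change.
Since `ρ_out(r)` is orthogonal, the intertwining relations leave every attention score
`⟨W_Q F_i, W_K(X_j - X_i) F_j⟩` unchanged, so only the values move, each by `ρ_out(r)`.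
-/

theorem Matrix.dotProduct_mulVec_mulVec_of_mem_orthogonalGroup {n R : Type*} [Fintype n]
    [DecidableEq n] [CommRing R] {A : Matrix n n R} (hA : A ∈ orthogonalGroup n R)
    (u v : n → R) : (A *ᵥ u) ⬝ᵥ (A *ᵥ v) = u ⬝ᵥ v := by
  rw [dotProduct_mulVec, vecMul_mulVec, (mem_orthogonalGroup_iff' n R).mp hA, vecMul_one]

theorem Matrix.dotProduct_mulVec_mulVec_of_intertwine {m p R : Type*} [Fintype m] [Fintype p]
    [DecidableEq p] [CommRing R] {ρ : Matrix m m R} {O : Matrix p p R}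
    (hO : O ∈ orthogonalGroup p R) {Q K K' : Matrix p m R} (hQ : Q * ρ = O * Q)
    (hK : K' * ρ = O * K) (u v : m → R) :
    (Q *ᵥ ρ *ᵥ u) ⬝ᵥ (K' *ᵥ ρ *ᵥ v) = (Q *ᵥ u) ⬝ᵥ (K *ᵥ v) := by
  rw [mulVec_mulVec, mulVec_mulVec, hQ, hK, ← mulVec_mulVec, ← mulVec_mulVec,
    dotProduct_mulVec_mulVec_of_mem_orthogonalGroup hO]

theorem SO3.coe_mem_orthogonalGroup (r : SO3) :
    (r : Matrix (Fin 3) (Fin 3) ℝ) ∈ orthogonalGroup (Fin 3) ℝ :=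
  (mem_specialOrthogonalGroup_iff.mp r.2).1

theorem mv_sub (M : Matrix (Fin 3) (Fin 3) ℝ) (u v : V3) : mv M (u - v) = mv M u - mv M v := by
  simp [mv, mulVec_sub]

theorem norm_mv {M : Matrix (Fin 3) (Fin 3) ℝ} (hM : M ∈ orthogonalGroup (Fin 3) ℝ) (v : V3) :
    ‖mv M v‖ = ‖v‖ := by
  have hsq : ‖mv M v‖ ^ 2 = ‖v‖ ^ 2 := by
    rw [← real_inner_self_eq_norm_sq, ← real_inner_self_eq_norm_sq]
    exact dotProduct_mulVec_mulVec_of_mem_orthogonalGroup hM _ _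
  exact (sq_eq_sq₀ (norm_nonneg _) (norm_nonneg _)).mp hsq

section RotoTranslation

variable {N : ℕ} (r : SO3) (T : V3) (X : Fin N → V3)

theorem rt_sub_rt (i j : Fin N) : rt r T X i - rt r T X j = mv r (X i - X j) := by
  rw [rt, rt, add_sub_add_right_eq_sub, mv_sub]

theorem norm_rt_sub_rt (i j : Fin N) : ‖rt r T X i - rt r T X j‖ = ‖X i - X j‖ := by
  rw [rt_sub_rt, norm_mv (SO3.coe_mem_orthogonalGroup r)]

theorem dk_rt (i : Fin N) (k : ℕ) : dk (rt r T X) i k = dk X i k := by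
  simp only [dk, norm_rt_sub_rt]

theorem nbhd_rt (i : Fin N) (k : ℕ) : nbhd (rt r T X) i k = nbhd X i k := by
  simp only [nbhd, norm_rt_sub_rt, dk_rt]

theorem attnKernel_rt {m p : ℕ} (k : ℕ) {ρ : Matrix (Fin m) (Fin m) ℝ}
    {O : Matrix (Fin p) (Fin p) ℝ} (hO : O ∈ orthogonalGroup (Fin p) ℝ)
    {WQ : Matrix (Fin p) (Fin m) ℝ} {WK : V3 → Matrix (Fin p) (Fin m) ℝ}
    (hWQ : WQ * ρ = O * WQ) (hWK : ∀ y, WK (mv r y) * ρ = O * WK y)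
    (F : Fin N → (Fin m → ℝ)) (i j : Fin N) :
    attnKernel m p k WQ WK (rt r T X) (fun i' => ρ *ᵥ F i') i j =
      attnKernel m p k WQ WK X F i j := by
  simp only [attnKernel, nbhd_rt, rt_sub_rt,
    dotProduct_mulVec_mulVec_of_intertwine hO hWQ (hWK _)]

end RotoTranslation

theorem selfAttn_equivariant_general (N m p : ℕ)
    (ρin : SO3 →* GL (Fin m) ℝ)
    (ρout : SO3 →* Matrix.orthogonalGroup (Fin p) ℝ)
    (WQ : Matrix (Fin p) (Fin m) ℝ)
    (hWQ : ∀ r : SO3, WQ * ((ρin r : GL (Fin m) ℝ) : Matrix (Fin m) (Fin m) ℝ) =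
      (ρout r : Matrix (Fin p) (Fin p) ℝ) * WQ)
    (WK WV : V3 → Matrix (Fin p) (Fin m) ℝ)
    (hWK : ∀ (r : SO3) (y : V3),
      WK (mv (r : Matrix (Fin 3) (Fin 3) ℝ) y) *
          ((ρin r : GL (Fin m) ℝ) : Matrix (Fin m) (Fin m) ℝ) =
        (ρout r : Matrix (Fin p) (Fin p) ℝ) * WK y)
    (hWV : ∀ (r : SO3) (y : V3),
      WV (mv (r : Matrix (Fin 3) (Fin 3) ℝ) y) *
          ((ρin r : GL (Fin m) ℝ) : Matrix (Fin m) (Fin m) ℝ) =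
        (ρout r : Matrix (Fin p) (Fin p) ℝ) * WV y)
    (X : Fin N → V3) (F : Fin N → (Fin m → ℝ)) (k : ℕ)
    (r : SO3) (T : V3) (i : Fin N) :
    selfAttn m p k WQ WK WV (rt r T X)
        (fun i' => ((ρin r : GL (Fin m) ℝ) : Matrix (Fin m) (Fin m) ℝ) *ᵥ F i') i =
      (ρout r : Matrix (Fin p) (Fin p) ℝ) *ᵥ selfAttn m p k WQ WK WV X F i := by
  rw [selfAttn, selfAttn, nbhd_rt, mulVec_sum]
  refine Finset.sum_congr rfl fun j _ => ?_
  rw [attnKernel_rt r T X k (ρout r).2 (hWQ r) (hWK r), rt_sub_rt, mulVec_smul, mulVec_mulVec,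
    hWV, ← mulVec_mulVec]

/-- the self-attention layer is SE(3)-equivariant:
`SA(ρ_in(r)∘F, L_{(R,T)}[X])_i = ρ_out(r)·SA(F,X)_i`. -/
theorem selfAttn_equivariant (N m p : ℕ) (hm : 0 < m) (hp : 0 < p)
    (ρin : SO3 →* GL (Fin m) ℝ)
    (ρout : SO3 →* Matrix.orthogonalGroup (Fin p) ℝ)
    (WQ : Matrix (Fin p) (Fin m) ℝ)
    (hWQ : ∀ r : SO3, WQ * ((ρin r : GL (Fin m) ℝ) : Matrix (Fin m) (Fin m) ℝ) =
      (ρout r : Matrix (Fin p) (Fin p) ℝ) * WQ)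
    (WK WV : V3 → Matrix (Fin p) (Fin m) ℝ)
    (hWK : ∀ (r : SO3) (y : V3),
      WK (mv (r : Matrix (Fin 3) (Fin 3) ℝ) y) *
          ((ρin r : GL (Fin m) ℝ) : Matrix (Fin m) (Fin m) ℝ) =
        (ρout r : Matrix (Fin p) (Fin p) ℝ) * WK y)
    (hWV : ∀ (r : SO3) (y : V3),
      WV (mv (r : Matrix (Fin 3) (Fin 3) ℝ) y) *
          ((ρin r : GL (Fin m) ℝ) : Matrix (Fin m) (Fin m) ℝ) =
        (ρout r : Matrix (Fin p) (Fin p) ℝ) * WV y)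
    (X : Fin N → V3) (F : Fin N → (Fin m → ℝ)) (k : ℕ) (hk1 : 1 ≤ k) (hkN : k ≤ N)
    (r : SO3) (T : V3) (i : Fin N) :
    selfAttn m p k WQ WK WV (rt r T X)
        (fun i' => ((ρin r : GL (Fin m) ℝ) : Matrix (Fin m) (Fin m) ℝ) *ᵥ F i') i =
      (ρout r : Matrix (Fin p) (Fin p) ℝ) *ᵥ selfAttn m p k WQ WK WV X F i :=
  selfAttn_equivariant_general N m p ρin ρout WQ hWQ WK WV hWK hWV X F k r T i
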